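/- For any finite set F of matrices in M_d(Q̄), the normalized height satisfies ĥ(F) = lim_{n→∞} (1/n) h(F^n) = inf_{n∈ℕ} (1/n) h(F^n). -/

import Mathlib

/-!
STATEMENT 14.  For a finite set `F` of matrices in `M_d(Q̄)` (formalized as a finite set
of matrices over an arbitrary number field `K`; the heights are independent of the
choice of `K`), the normalized height satisfies
`ĥ(F) = lim_{n→∞} (1/n) h(F^n) = inf_{n ≥ 1} (1/n) h(F^n)`.
Places of `K` are accounted for by ring embeddings of `K` into `ℂ` and into the
algebraic closures of the `ℚ_p` (each place `v` counted with its local degree `n_v`);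
`vp p` is the unique absolute value on the algebraic closure of `ℚ_p` extending the
`p`-adic one, supplied as data with the extension property.
-/

open Filter
open scoped Pointwise

noncomputable section

/-- The operator norm on `d × d` complex matrices induced by the Hermitian (Euclidean)
norm on `ℂ^d`.  For matrices with entries in `ℝ ⊆ ℂ` this restricts to the operator norm
induced by the Euclidean norm on `ℝ^d`, and `ℂ` is the algebraic closure of both `ℝ` and
`ℂ`; hence this covers both archimedean local fields. -/
def copNorm (d : ℕ) (A : Matrix (Fin d) (Fin d) ℂ) : ℝ :=
  ‖Matrix.toEuclideanCLM (𝕜 := ℂ) A‖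

/-- The norm `‖Q‖` of a set of matrices. -/
def cNorm (d : ℕ) (Q : Set (Matrix (Fin d) (Fin d) ℂ)) : ℝ :=
  sSup (copNorm d '' Q)

/-- `Q` is a bounded set of matrices. -/
def cBounded (d : ℕ) (Q : Set (Matrix (Fin d) (Fin d) ℂ)) : Prop :=
  ∃ C : ℝ, ∀ A ∈ Q, copNorm d A ≤ C

/-- The minimal norm `E(Q) = inf_{x ∈ GL_d} ‖x Q x⁻¹‖`. -/
def cE (d : ℕ) (Q : Set (Matrix (Fin d) (Fin d) ℂ)) : ℝ :=
  sInf { r | ∃ x : (Matrix (Fin d) (Fin d) ℂ)ˣ,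
    r = cNorm d ((fun g => x.val * g * x.inv) '' Q) }

/-- The maximal eigenvalue `Λ(Q) = max {|λ| : λ eigenvalue of some q ∈ Q}`. -/
def cLambda (d : ℕ) (Q : Set (Matrix (Fin d) (Fin d) ℂ)) : ℝ :=
  sSup { r | ∃ A ∈ Q, ∃ μ : ℂ, (Matrix.charpoly A).IsRoot μ ∧ r = ‖μ‖ }

/-- The spectral radius `R(Q) = lim_n ‖Q^n‖^{1/n}` (the limit exists by
submultiplicativity; `Filter.limUnder` selects it). -/
def cR (d : ℕ) (Q : Set (Matrix (Fin d) (Fin d) ℂ)) : ℝ :=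
  limUnder atTop fun n : ℕ => cNorm d (Q ^ n) ^ ((n : ℝ)⁻¹)

/-- The sup norm on `L^d` associated to an absolute value `v` on `L`. -/
def vVec {L : Type*} [Field L] (v : AbsoluteValue L ℝ) (d : ℕ) (x : Fin d → L) : ℝ :=
  sSup (Set.range fun i => v (x i))

/-- The operator norm on `d × d` matrices over `L` induced by the sup norm on `L^d`. -/
def vOp {L : Type*} [Field L] (v : AbsoluteValue L ℝ) (d : ℕ)
    (A : Matrix (Fin d) (Fin d) L) : ℝ :=
  sInf { c | 0 ≤ c ∧ ∀ x : Fin d → L, vVec v d (A.mulVec x) ≤ c * vVec v d x }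

/-- The norm `‖Q‖` of a set of matrices over `L`. -/
def vNorm {L : Type*} [Field L] (v : AbsoluteValue L ℝ) (d : ℕ)
    (Q : Set (Matrix (Fin d) (Fin d) L)) : ℝ :=
  sSup (vOp v d '' Q)

/-- The minimal norm `E(Q) = inf_{x ∈ GL_d} ‖x Q x⁻¹‖`. -/
def vE {L : Type*} [Field L] (v : AbsoluteValue L ℝ) (d : ℕ)
    (Q : Set (Matrix (Fin d) (Fin d) L)) : ℝ :=
  sInf { r | ∃ x : (Matrix (Fin d) (Fin d) L)ˣ,
    r = vNorm v d ((fun g => x.val * g * x.inv) '' Q) }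

/-- The maximal eigenvalue `Λ(Q) = max {v(μ) : μ eigenvalue of some q ∈ Q}`. -/
def vLambda {L : Type*} [Field L] (v : AbsoluteValue L ℝ) (d : ℕ)
    (Q : Set (Matrix (Fin d) (Fin d) L)) : ℝ :=
  sSup { r | ∃ A ∈ Q, ∃ μ : L, (Matrix.charpoly A).IsRoot μ ∧ r = v μ }

/-- The spectral radius `R(Q) = lim_n ‖Q^n‖^{1/n}`. -/
def vR {L : Type*} [Field L] (v : AbsoluteValue L ℝ) (d : ℕ)
    (Q : Set (Matrix (Fin d) (Fin d) L)) : ℝ :=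
  limUnder atTop fun n : ℕ => vNorm v d (Q ^ n) ^ ((n : ℝ)⁻¹)

instance (p : Nat.Primes) : Fact (p : ℕ).Prime := ⟨p.2⟩

/-- `log⁺ x = max 0 (log x)`. -/
def logPlus (x : ℝ) : ℝ := max 0 (Real.log x)

/-- The normalized height `ĥ(F)` of a set `F` of `d × d` matrices over a number field `K`:
the weighted sum, over all places of `K`, of `log⁺` of the spectral radius of `F` at that
place.  Places of `K` are accounted for by ring embeddings: summing a place-dependent
quantity over all embeddings `K →+* ℂ`, respectively over all embeddings
`K →+* (algebraic closure of ℚ_p)` for all primes `p`, counts each place `v` exactly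
`n_v` times, where `n_v` is the local degree.  Here `vp p` is the unique absolute value
on the algebraic closure of `ℚ_p` extending the standard `p`-adic absolute value
(supplied as data, together with the extension property, in the theorem). -/
def hhat (d : ℕ)
    (vp : ∀ p : Nat.Primes, AbsoluteValue (AlgebraicClosure ℚ_[(p : ℕ)]) ℝ)
    (K : Type*) [Field K] [NumberField K]
    (F : Set (Matrix (Fin d) (Fin d) K)) : ℝ :=
  (Module.finrank ℚ K : ℝ)⁻¹ *
    ((∑' σ : K →+* ℂ, logPlus (cR d ((fun A => A.map ⇑σ) '' F))) +
      ∑' p : Nat.Primes, ∑' σ : K →+* AlgebraicClosure ℚ_[(p : ℕ)],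
        logPlus (vR (vp p) d ((fun A => A.map ⇑σ) '' F)))

/-- The height `h(F)` of a set of `d × d` matrices over a number field `K` : the weighted
sum over all places of `log⁺` of the norm `‖F‖_v`. -/
def hht (d : ℕ)
    (vp : ∀ p : Nat.Primes, AbsoluteValue (AlgebraicClosure ℚ_[(p : ℕ)]) ℝ)
    (K : Type*) [Field K] [NumberField K]
    (F : Set (Matrix (Fin d) (Fin d) K)) : ℝ :=
  (Module.finrank ℚ K : ℝ)⁻¹ *
    ((∑' σ : K →+* ℂ, logPlus (cNorm d ((fun A => A.map ⇑σ) '' F))) +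
      ∑' p : Nat.Primes, ∑' σ : K →+* AlgebraicClosure ℚ_[(p : ℕ)],
        logPlus (vNorm (vp p) d ((fun A => A.map ⇑σ) '' F)))

/-!
At each place `v` the sequence `n ↦ ‖F^n‖_v` is submultiplicative, so Fekete's lemma applied to
`log ‖F^n‖_v` shows that `‖F^n‖_v^{1/n}` converges (to `0` when `log ‖F^n‖_v / n` is unbounded
below); as `log⁺` is continuous, `(1/n) log⁺ ‖F^n‖_v → log⁺ R_v(F)`. The entries of `F` are
algebraic, so for all but finitely many primes every embedding of `K` into `ℚ̄_p` sends `F` to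
matrices with integral entries, and then `‖F^n‖_v ≤ 1` for every `n`. Hence `h(F^n)` and `ĥ(F)` are
finite sums of local terms, and the limit follows place by place. Finally `n ↦ h(F^n)` is
subadditive because `log⁺ (x y) ≤ log⁺ x + log⁺ y`, so by Fekete's lemma the limit is also the
infimum.
-/

open Real Set Topology

theorem Subadditive.tendsto_atBot_of_not_bddBelow {u : ℕ → ℝ} (h : Subadditive u)
    (hbdd : ¬ BddBelow (range fun n => u n / n)) : Tendsto (fun n => u n / n) atTop atBot := by
  refine tendsto_atBot.2 fun L => ?_
  obtain ⟨_, ⟨n, rfl⟩, hn⟩ := not_bddBelow_iff.1 hbdd (min L (-1))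
  have hn0 : n ≠ 0 := by
    rintro rfl
    simp only [CharP.cast_eq_zero, div_zero] at hn
    linarith [min_le_right L (-1)]
  filter_upwards [h.eventually_div_lt_of_div_lt hn0 (hn.trans_le (min_le_left _ _))] with k hk
  exact hk.le

theorem Subadditive.eq_sInf_of_tendsto {u : ℕ → ℝ} (h : Subadditive u) (hu : ∀ n, 0 ≤ u n)
    {L : ℝ} (hL : Tendsto (fun n : ℕ => (n : ℝ)⁻¹ * u n) atTop (𝓝 L)) :
    L = sInf { x : ℝ | ∃ n : ℕ, 0 < n ∧ x = (n : ℝ)⁻¹ * u n } := by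
  have hbdd : BddBelow (range fun n => u n / n) :=
    ⟨0, by rintro _ ⟨n, rfl⟩; exact div_nonneg (hu n) n.cast_nonneg⟩
  simp_rw [inv_mul_eq_div] at hL ⊢
  rw [tendsto_nhds_unique hL (h.tendsto_lim hbdd), Subadditive.lim]
  congr 1
  ext x
  simp only [mem_image, mem_Ici, mem_ofPred_eq, Nat.one_le_iff_ne_zero, Nat.pos_iff_ne_zero,
    eq_comm]

theorem exists_tendsto_rpow_inv_of_submultiplicative {u : ℕ → ℝ} (hu : ∀ n, 0 ≤ u n)
    (hmul : ∀ m n, u (m + n) ≤ u m * u n) :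
    ∃ R, Tendsto (fun n : ℕ => u n ^ (n : ℝ)⁻¹) atTop (𝓝 R) := by
  by_cases hpos : ∀ n, 0 < u n
  · have hsub : Subadditive fun n => log (u n) := fun m n => by
      rw [← log_mul (hpos m).ne' (hpos n).ne']
      exact log_le_log (hpos _) (hmul m n)
    have hexp : (fun n : ℕ => u n ^ (n : ℝ)⁻¹) = fun n => exp (log (u n) / n) := by
      ext n
      rw [rpow_def_of_pos (hpos n), div_eq_mul_inv]
    rw [hexp]
    by_cases hbdd : BddBelow (range fun n => log (u n) / n)
    · exact ⟨_, (continuous_exp.tendsto _).comp (hsub.tendsto_lim hbdd)⟩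
    · exact ⟨0, tendsto_exp_atBot.comp (hsub.tendsto_atBot_of_not_bddBelow hbdd)⟩
  · simp only [not_forall, not_lt] at hpos
    obtain ⟨m, hm⟩ := hpos
    refine ⟨0, tendsto_const_nhds.congr' ?_⟩
    filter_upwards [eventually_gt_atTop m] with n hn
    obtain ⟨k, rfl⟩ := Nat.exists_eq_add_of_lt hn
    have hzero : u (m + k + 1) = 0 := by
      refine le_antisymm ?_ (hu _)
      calc u (m + (k + 1)) ≤ u m * u (k + 1) := hmul m (k + 1)
        _ ≤ 0 := mul_nonpos_of_nonpos_of_nonneg hm (hu _)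
    rw [hzero, zero_rpow (by positivity)]

theorem Real.posLog_rpow {x : ℝ} (hx : 0 ≤ x) {r : ℝ} (hr : 0 ≤ r) :
    posLog (x ^ r) = r * posLog x := by
  rcases hx.eq_or_lt with rfl | hx
  · rcases hr.eq_or_lt with rfl | hr
    · simp
    · simp [zero_rpow hr.ne']
  · rw [posLog, posLog, log_rpow hx, mul_max_of_nonneg _ _ hr, mul_zero]

protected theorem Set.Finite.pow {M : Type*} [Monoid M] {s : Set M} (hs : s.Finite) :
    ∀ n : ℕ, (s ^ n).Finite
  | 0 => by simp
  | n + 1 => by rw [pow_succ]; exact (hs.pow n).mul hs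

theorem sSup_image_nonneg {α : Type*} {f : α → ℝ} (hf0 : ∀ a, 0 ≤ f a) (S : Set α) :
    0 ≤ sSup (f '' S) :=
  Real.sSup_nonneg (forall_mem_image.2 fun a _ => hf0 a)

section SetNorm

variable {M : Type*} [Monoid M] {f : M → ℝ} (hf0 : ∀ a, 0 ≤ f a)
  (hfmul : ∀ a b, f (a * b) ≤ f a * f b)
include hf0 hfmul

theorem sSup_image_mul_le {P Q : Set M} (hP : P.Finite) (hQ : Q.Finite) :
    sSup (f '' (P * Q)) ≤ sSup (f '' P) * sSup (f '' Q) := by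
  refine Real.sSup_le (forall_mem_image.2 ?_)
    (mul_nonneg (sSup_image_nonneg hf0 P) (sSup_image_nonneg hf0 Q))
  rintro _ ⟨a, ha, b, hb, rfl⟩
  calc f (a * b) ≤ f a * f b := hfmul a b
    _ ≤ sSup (f '' P) * sSup (f '' Q) :=
      mul_le_mul (le_csSup (hP.image f).bddAbove (mem_image_of_mem f ha))
        (le_csSup (hQ.image f).bddAbove (mem_image_of_mem f hb)) (hf0 b)
        (sSup_image_nonneg hf0 P)

theorem sSup_image_pow_le (hf1 : f 1 ≤ 1) {Q : Set M} (hQ : Q.Finite) :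
    ∀ n : ℕ, sSup (f '' (Q ^ n)) ≤ sSup (f '' Q) ^ n
  | 0 => by simpa using hf1
  | n + 1 => by
    rw [pow_succ, pow_succ]
    exact (sSup_image_mul_le hf0 hfmul (hQ.pow n) hQ).trans (mul_le_mul_of_nonneg_right
      (sSup_image_pow_le hf1 hQ n) (sSup_image_nonneg hf0 Q))

theorem posLog_sSup_image_pow_add_le {Q : Set M} (hQ : Q.Finite) (m n : ℕ) :
    posLog (sSup (f '' (Q ^ (m + n)))) ≤
      posLog (sSup (f '' (Q ^ m))) + posLog (sSup (f '' (Q ^ n))) := by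
  refine (posLog_le_posLog (sSup_image_nonneg hf0 _) ?_).trans posLog_mul
  rw [pow_add]
  exact sSup_image_mul_le hf0 hfmul (hQ.pow m) (hQ.pow n)

theorem tendsto_inv_mul_posLog_sSup_image_pow {Q : Set M} (hQ : Q.Finite) :
    Tendsto (fun n : ℕ => (n : ℝ)⁻¹ * posLog (sSup (f '' (Q ^ n)))) atTop
      (𝓝 (posLog (limUnder atTop fun n : ℕ => sSup (f '' (Q ^ n)) ^ (n : ℝ)⁻¹))) := by
  obtain ⟨R, hR⟩ := exists_tendsto_rpow_inv_of_submultiplicative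
    (fun n => sSup_image_nonneg hf0 (Q ^ n)) fun m n => by
      rw [pow_add]
      exact sSup_image_mul_le hf0 hfmul (hQ.pow m) (hQ.pow n)
  rw [hR.limUnder_eq]
  refine ((continuous_posLog.tendsto R).comp hR).congr fun n => ?_
  exact posLog_rpow (sSup_image_nonneg hf0 _) (inv_nonneg.2 n.cast_nonneg)

end SetNorm

theorem image_map_pow {K R : Type*} [Field K] [CommRing R] {d : ℕ} (σ : K →+* R)
    (F : Set (Matrix (Fin d) (Fin d) K)) (n : ℕ) :
    (fun A : Matrix (Fin d) (Fin d) K => A.map σ) '' (F ^ n) =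
      ((fun A : Matrix (Fin d) (Fin d) K => A.map σ) '' F) ^ n :=
  image_pow σ.mapMatrix F n

theorem copNorm_mul_le (d : ℕ) (A B : Matrix (Fin d) (Fin d) ℂ) :
    copNorm d (A * B) ≤ copNorm d A * copNorm d B := by
  rw [copNorm, map_mul]
  exact norm_mul_le _ _

section vOp

variable {L : Type*} [Field L] (v : AbsoluteValue L ℝ) {d : ℕ}

theorem vOp_le {A : Matrix (Fin d) (Fin d) L} {c : ℝ} (hc : 0 ≤ c)
    (h : ∀ x, vVec v d (A.mulVec x) ≤ c * vVec v d x) : vOp v d A ≤ c :=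
  csInf_le ⟨0, fun _ hc => hc.1⟩ ⟨hc, h⟩

theorem vOp_nonneg (A : Matrix (Fin d) (Fin d) L) : 0 ≤ vOp v d A :=
  Real.sInf_nonneg fun _ hc => hc.1

theorem vVec_mulVec_le (A : Matrix (Fin d) (Fin d) L) (x : Fin d → L) :
    vVec v d (A.mulVec x) ≤ vOp v d A * vVec v d x := by
  set c₀ := (d : ℝ) * ⨆ ij : Fin d × Fin d, v (A ij.1 ij.2)
  have hc₀ : 0 ≤ c₀ ∧ ∀ y, vVec v d (A.mulVec y) ≤ c₀ * vVec v d y :=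
    ⟨mul_nonneg d.cast_nonneg (Real.iSup_nonneg_of_nonnegHomClass v _), fun y => by
      have h := v.iSup_abv_linearMap_apply_le (fun ij : Fin d × Fin d => A ij.1 ij.2) y
      rwa [Nat.card_eq_fintype_card, Fintype.card_fin] at h⟩
  rcases (Real.iSup_nonneg_of_nonnegHomClass v x).eq_or_lt with hx | hx
  · have hx0 : vVec v d x = 0 := hx.symm
    have h := hc₀.2 x
    rwa [hx0, mul_zero] at h ⊢
  · exact (div_le_iff₀ hx).1 (le_csInf ⟨c₀, hc₀⟩ fun c hc => (div_le_iff₀ hx).2 (hc.2 x))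

theorem vOp_mul_le (A B : Matrix (Fin d) (Fin d) L) :
    vOp v d (A * B) ≤ vOp v d A * vOp v d B := by
  refine vOp_le v (mul_nonneg (vOp_nonneg v A) (vOp_nonneg v B)) fun x => ?_
  rw [← Matrix.mulVec_mulVec, mul_assoc]
  exact (vVec_mulVec_le v A _).trans
    (mul_le_mul_of_nonneg_left (vVec_mulVec_le v B x) (vOp_nonneg v A))

theorem vOp_one_le : vOp v d (1 : Matrix (Fin d) (Fin d) L) ≤ 1 :=
  vOp_le v zero_le_one fun x => by rw [Matrix.one_mulVec, one_mul]

theorem vOp_le_one_of_isNonarchimedean {v : AbsoluteValue L ℝ} (hv : IsNonarchimedean v)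
    {A : Matrix (Fin d) (Fin d) L} (hA : ∀ i j, v (A i j) ≤ 1) : vOp v d A ≤ 1 := by
  refine vOp_le v zero_le_one fun x => ?_
  refine (hv.iSup_abv_linearMap_apply_le (fun ij : Fin d × Fin d => A ij.1 ij.2) x).trans ?_
  exact mul_le_mul_of_nonneg_right (Real.iSup_le (fun ij => hA ij.1 ij.2) zero_le_one)
    (Real.iSup_nonneg_of_nonnegHomClass v x)

theorem posLog_vNorm_pow_eq_zero {v : AbsoluteValue L ℝ} (hv : IsNonarchimedean v)
    {Q : Set (Matrix (Fin d) (Fin d) L)} (hQ : Q.Finite) (hQ1 : ∀ A ∈ Q, ∀ i j, v (A i j) ≤ 1)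
    (n : ℕ) : posLog (vNorm v d (Q ^ n)) = 0 := by
  have hQ_le : vNorm v d Q ≤ 1 :=
    Real.sSup_le (forall_mem_image.2 fun A hA => vOp_le_one_of_isNonarchimedean hv (hQ1 A hA))
      zero_le_one
  have hpow_le : vNorm v d (Q ^ n) ≤ 1 :=
    (sSup_image_pow_le (vOp_nonneg v) (vOp_mul_le v) (vOp_one_le v) hQ n).trans
      (pow_le_one₀ (sSup_image_nonneg (vOp_nonneg v) Q) hQ_le)
  rw [posLog_apply]
  exact max_eq_left (log_nonpos (sSup_image_nonneg (vOp_nonneg v) _) hpow_le)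

end vOp

theorem AbsoluteValue.isNonarchimedean_of_natCast_le_one {L : Type*} [Field L]
    (v : AbsoluteValue L ℝ) (h : ∀ n : ℕ, v n ≤ 1) : IsNonarchimedean v := by
  let _ : NormedField L := v.toNormedField
  have := IsUltrametricDist.isUltrametricDist_of_forall_norm_natCast_le_one (R := L) h
  exact IsUltrametricDist.norm_add_le_max

open Polynomial in
theorem IsNonarchimedean.apply_le_one_of_isRoot {L : Type*} [Field L] {v : AbsoluteValue L ℝ}
    (hv : IsNonarchimedean v) {q : L[X]} (hq : q.Monic) (hc : ∀ i, v (q.coeff i) ≤ 1) {x : L}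
    (hx : q.IsRoot x) : v x ≤ 1 := by
  by_contra! h
  set n := q.natDegree
  have hn : n ≠ 0 := fun h0 => by simp [hq.natDegree_eq_zero.1 h0] at hx
  have hxn : x ^ n = -∑ i ∈ Finset.range n, q.coeff i * x ^ i := by
    have h := hx.eq_zero
    rw [hq.as_sum] at h
    simp only [eval_add, eval_pow, eval_X, eval_finsetSum, eval_mul, eval_C] at h
    exact eq_neg_of_add_eq_zero_left h
  have hterm (i : Finset.range n) : v (q.coeff i * x ^ (i : ℕ)) ≤ v x ^ (n - 1) := by
    rw [map_mul, map_pow]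
    calc v (q.coeff i) * v x ^ (i : ℕ) ≤ 1 * v x ^ (i : ℕ) := by gcongr; exact hc i
      _ ≤ v x ^ (n - 1) := by
        rw [one_mul]
        exact pow_le_pow_right₀ h.le (Nat.le_sub_one_of_lt (Finset.mem_range.1 i.2))
  have hle : v x ^ n ≤ v x ^ (n - 1) := by
    rw [← map_pow, hxn, map_neg_eq_map]
    exact hv.apply_sum_le.trans (Real.iSup_le hterm (pow_nonneg (v.nonneg x) _))
  exact (pow_lt_pow_right₀ h (Nat.sub_one_lt hn)).not_ge hle

theorem IsNonarchimedean.apply_le_one_of_minpoly_coeff {K L : Type*} [Field K] [CharZero K]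
    [Field L] [CharZero L] {v : AbsoluteValue L ℝ} (hv : IsNonarchimedean v) (σ : K →+* L)
    {x : K} (hx : IsIntegral ℚ x) (hc : ∀ i, v ((minpoly ℚ x).coeff i) ≤ 1) : v (σ x) ≤ 1 := by
  refine hv.apply_le_one_of_isRoot ((minpoly.monic hx).map (algebraMap ℚ L))
    (fun i => by simpa using hc i) ?_
  rw [Polynomial.IsRoot, Polynomial.eval_map_algebraMap, ← σ.toRatAlgHom_apply,
    Polynomial.aeval_algHom_apply, minpoly.aeval, map_zero]

theorem Nat.Primes.finite_setOf_dvd {n : ℕ} (hn : n ≠ 0) :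
    {p : Nat.Primes | (p : ℕ) ∣ n}.Finite :=
  (n.divisors.finite_toSet.preimage Subtype.val_injective.injOn).subset fun _ hp =>
    Nat.mem_divisors.2 ⟨hp, hn⟩

section Padic

variable (vp : ∀ p : Nat.Primes, AbsoluteValue (AlgebraicClosure ℚ_[(p : ℕ)]) ℝ)
  (hvp : ∀ (p : Nat.Primes) (x : ℚ_[(p : ℕ)]),
    vp p (algebraMap ℚ_[(p : ℕ)] (AlgebraicClosure ℚ_[(p : ℕ)]) x) = ‖x‖)
include hvp

theorem vp_ratCast (p : Nat.Primes) (r : ℚ) : vp p r = ‖(r : ℚ_[(p : ℕ)])‖ := by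
  rw [← map_ratCast (algebraMap ℚ_[(p : ℕ)] (AlgebraicClosure ℚ_[(p : ℕ)])) r, hvp]

theorem isNonarchimedean_vp (p : Nat.Primes) : IsNonarchimedean (vp p) :=
  (vp p).isNonarchimedean_of_natCast_le_one fun n => by
    rw [← map_natCast (algebraMap ℚ_[(p : ℕ)] (AlgebraicClosure ℚ_[(p : ℕ)])) n, hvp]
    exact IsUltrametricDist.norm_natCast_le_one ℚ_[(p : ℕ)] n

theorem finite_setOf_exists_one_lt_vp {K : Type*} [Field K] [NumberField K] (x : K) :
    {p : Nat.Primes | ∃ σ : K →+* AlgebraicClosure ℚ_[(p : ℕ)], 1 < vp p (σ x)}.Finite := by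
  set q := minpoly ℚ x
  refine (q.support.finite_toSet.biUnion fun i _ =>
    Nat.Primes.finite_setOf_dvd (q.coeff i).den_nz).subset ?_
  rintro p ⟨σ, hσ⟩
  by_contra hp
  simp only [mem_iUnion, mem_ofPred_eq, Finset.mem_coe, not_exists] at hp
  refine hσ.not_ge ((isNonarchimedean_vp vp hvp p).apply_le_one_of_minpoly_coeff σ
    (Algebra.IsIntegral.isIntegral x) fun i => ?_)
  rw [vp_ratCast vp hvp]
  by_cases hi : i ∈ q.support
  · exact Padic.norm_rat_le_one (hp i hi)
  · rw [Polynomial.notMem_support_iff.1 hi, Rat.cast_zero, norm_zero]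
    exact zero_le_one

theorem exists_finset_forall_vp_entry_le_one {K : Type*} [Field K] [NumberField K] {d : ℕ}
    {F : Set (Matrix (Fin d) (Fin d) K)} (hF : F.Finite) :
    ∃ T : Finset Nat.Primes, ∀ p ∉ T, ∀ σ : K →+* AlgebraicClosure ℚ_[(p : ℕ)], ∀ A ∈ F,
      ∀ i j, vp p (σ (A i j)) ≤ 1 := by
  have hfin : {p : Nat.Primes | ∃ σ : K →+* AlgebraicClosure ℚ_[(p : ℕ)], ∃ A ∈ F, ∃ i j,
      1 < vp p (σ (A i j))}.Finite :=
    (hF.biUnion fun A _ => finite_iUnion fun i => finite_iUnion fun j =>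
      finite_setOf_exists_one_lt_vp vp hvp (A i j)).subset fun p ⟨σ, A, hA, i, j, h⟩ =>
        mem_biUnion hA (mem_iUnion.2 ⟨i, mem_iUnion.2 ⟨j, σ, h⟩⟩)
  exact ⟨hfin.toFinset, fun p hp σ A hA i j =>
    not_lt.1 fun h => hp (hfin.mem_toFinset.2 ⟨σ, A, hA, i, j, h⟩)⟩

theorem exists_finset_forall_posLog_vNorm_pow_eq_zero {K : Type*} [Field K] [NumberField K]
    {d : ℕ} {F : Set (Matrix (Fin d) (Fin d) K)} (hF : F.Finite) :
    ∃ T : Finset Nat.Primes, ∀ n : ℕ, ∀ p ∉ T, ∀ σ : K →+* AlgebraicClosure ℚ_[(p : ℕ)],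
      posLog (vNorm (vp p) d (((fun A => A.map σ) '' F) ^ n)) = 0 := by
  obtain ⟨T, hT⟩ := exists_finset_forall_vp_entry_le_one vp hvp hF
  refine ⟨T, fun n p hp σ => posLog_vNorm_pow_eq_zero (isNonarchimedean_vp vp hvp p)
    (hF.image _) ?_ n⟩
  rintro _ ⟨A, hA, rfl⟩
  exact hT p hp σ A hA

end Padic

def placeSum (K : Type*) [Field K] [NumberField K] (a : (K →+* ℂ) → ℝ)
    (b : ∀ p : Nat.Primes, (K →+* AlgebraicClosure ℚ_[(p : ℕ)]) → ℝ) : ℝ :=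
  (Module.finrank ℚ K : ℝ)⁻¹ * ((∑' σ, a σ) + ∑' p, ∑' σ, b p σ)

section placeSum

variable {K : Type*} [Field K] [NumberField K]

theorem placeSum_eq_sum {a : (K →+* ℂ) → ℝ}
    {b : ∀ p : Nat.Primes, (K →+* AlgebraicClosure ℚ_[(p : ℕ)]) → ℝ} (T : Finset Nat.Primes)
    (hb : ∀ p ∉ T, ∀ σ, b p σ = 0) :
    placeSum K a b = (Module.finrank ℚ K : ℝ)⁻¹ * ((∑ σ, a σ) + ∑ p ∈ T, ∑ σ, b p σ) := by
  rw [placeSum, tsum_fintype, tsum_eq_sum (s := T) fun p hp => by simp [hb p hp]]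
  simp only [tsum_fintype]

theorem placeSum_nonneg {a : (K →+* ℂ) → ℝ}
    {b : ∀ p : Nat.Primes, (K →+* AlgebraicClosure ℚ_[(p : ℕ)]) → ℝ} (ha : ∀ σ, 0 ≤ a σ)
    (hb : ∀ p σ, 0 ≤ b p σ) : 0 ≤ placeSum K a b :=
  mul_nonneg (inv_nonneg.2 (Nat.cast_nonneg _))
    (add_nonneg (tsum_nonneg ha) (tsum_nonneg fun p => tsum_nonneg (hb p)))

theorem mul_placeSum (c : ℝ) (a : (K →+* ℂ) → ℝ)
    (b : ∀ p : Nat.Primes, (K →+* AlgebraicClosure ℚ_[(p : ℕ)]) → ℝ) :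
    c * placeSum K a b = placeSum K (fun σ => c * a σ) fun p σ => c * b p σ := by
  simp only [placeSum, tsum_mul_left]
  ring

theorem placeSum_le_add {a a₁ a₂ : (K →+* ℂ) → ℝ}
    {b b₁ b₂ : ∀ p : Nat.Primes, (K →+* AlgebraicClosure ℚ_[(p : ℕ)]) → ℝ}
    (T : Finset Nat.Primes) (hb : ∀ p ∉ T, ∀ σ, b p σ = 0) (hb₁ : ∀ p ∉ T, ∀ σ, b₁ p σ = 0)
    (hb₂ : ∀ p ∉ T, ∀ σ, b₂ p σ = 0) (ha_le : ∀ σ, a σ ≤ a₁ σ + a₂ σ)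
    (hb_le : ∀ p σ, b p σ ≤ b₁ p σ + b₂ p σ) :
    placeSum K a b ≤ placeSum K a₁ b₁ + placeSum K a₂ b₂ := by
  rw [placeSum_eq_sum T hb, placeSum_eq_sum T hb₁, placeSum_eq_sum T hb₂, ← mul_add]
  refine mul_le_mul_of_nonneg_left ?_ (inv_nonneg.2 (Nat.cast_nonneg _))
  calc (∑ σ, a σ) + ∑ p ∈ T, ∑ σ, b p σ
      ≤ (∑ σ, (a₁ σ + a₂ σ)) + ∑ p ∈ T, ∑ σ, (b₁ p σ + b₂ p σ) :=
        add_le_add (Finset.sum_le_sum fun σ _ => ha_le σ)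
          (Finset.sum_le_sum fun p _ => Finset.sum_le_sum fun σ _ => hb_le p σ)
    _ = _ := by simp only [Finset.sum_add_distrib]; ring

theorem tendsto_placeSum {a : ℕ → (K →+* ℂ) → ℝ}
    {b : ℕ → ∀ p : Nat.Primes, (K →+* AlgebraicClosure ℚ_[(p : ℕ)]) → ℝ} {a' : (K →+* ℂ) → ℝ}
    {b' : ∀ p : Nat.Primes, (K →+* AlgebraicClosure ℚ_[(p : ℕ)]) → ℝ} (T : Finset Nat.Primes)
    (hb : ∀ n, ∀ p ∉ T, ∀ σ, b n p σ = 0) (ha_lim : ∀ σ, Tendsto (a · σ) atTop (𝓝 (a' σ)))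
    (hb_lim : ∀ p σ, Tendsto (b · p σ) atTop (𝓝 (b' p σ))) :
    Tendsto (fun n => placeSum K (a n) (b n)) atTop (𝓝 (placeSum K a' b')) := by
  have hb' : ∀ p ∉ T, ∀ σ, b' p σ = 0 := fun p hp σ =>
    tendsto_nhds_unique (hb_lim p σ) (tendsto_const_nhds.congr fun n => (hb n p hp σ).symm)
  simp only [placeSum_eq_sum T (hb _), placeSum_eq_sum T hb']
  exact tendsto_const_nhds.mul ((tendsto_finsetSum _ fun σ _ => ha_lim σ).add
    (tendsto_finsetSum _ fun p _ => tendsto_finsetSum _ fun σ _ => hb_lim p σ))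

end placeSum

theorem hht_eq_placeSum (d : ℕ)
    (vp : ∀ p : Nat.Primes, AbsoluteValue (AlgebraicClosure ℚ_[(p : ℕ)]) ℝ)
    (K : Type*) [Field K] [NumberField K] (F : Set (Matrix (Fin d) (Fin d) K)) :
    hht d vp K F = placeSum K (fun σ => posLog (cNorm d ((fun A => A.map σ) '' F)))
      fun p σ => posLog (vNorm (vp p) d ((fun A => A.map σ) '' F)) :=
  rfl

theorem hhat_eq_placeSum (d : ℕ)
    (vp : ∀ p : Nat.Primes, AbsoluteValue (AlgebraicClosure ℚ_[(p : ℕ)]) ℝ)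
    (K : Type*) [Field K] [NumberField K] (F : Set (Matrix (Fin d) (Fin d) K)) :
    hhat d vp K F = placeSum K (fun σ => posLog (cR d ((fun A => A.map σ) '' F)))
      fun p σ => posLog (vR (vp p) d ((fun A => A.map σ) '' F)) :=
  rfl

theorem normalized_height_eq_lim_heights (d : ℕ)
    (vp : ∀ p : Nat.Primes, AbsoluteValue (AlgebraicClosure ℚ_[(p : ℕ)]) ℝ)
    (hvp : ∀ (p : Nat.Primes) (x : ℚ_[(p : ℕ)]),
      vp p (algebraMap ℚ_[(p : ℕ)] (AlgebraicClosure ℚ_[(p : ℕ)]) x) = ‖x‖)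
    (K : Type) [Field K] [NumberField K]
    (F : Set (Matrix (Fin d) (Fin d) K)) (hF : F.Finite) :
    Tendsto (fun n : ℕ => (n : ℝ)⁻¹ * hht d vp K (F ^ n)) atTop (nhds (hhat d vp K F)) ∧
      hhat d vp K F
        = sInf { x : ℝ | ∃ n : ℕ, 0 < n ∧ x = (n : ℝ)⁻¹ * hht d vp K (F ^ n) } := by
  obtain ⟨T, hT⟩ := exists_finset_forall_posLog_vNorm_pow_eq_zero vp hvp hF
  have hlim : Tendsto (fun n : ℕ => (n : ℝ)⁻¹ * hht d vp K (F ^ n)) atTop (𝓝 (hhat d vp K F)) := by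
    simp only [hht_eq_placeSum, hhat_eq_placeSum, mul_placeSum, image_map_pow]
    exact tendsto_placeSum T (fun n p hp σ => by rw [hT n p hp σ, mul_zero])
      (fun σ => tendsto_inv_mul_posLog_sSup_image_pow (fun _ => norm_nonneg _)
        (copNorm_mul_le d) (hF.image _))
      fun p σ => tendsto_inv_mul_posLog_sSup_image_pow (f := vOp (vp p) d) (vOp_nonneg _)
        (vOp_mul_le _) (hF.image _)
  have hsub : Subadditive fun n => hht d vp K (F ^ n) := fun m n => by
    simp only [hht_eq_placeSum, image_map_pow]
    exact placeSum_le_add T (hT _) (hT _) (hT _)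
      (fun σ => posLog_sSup_image_pow_add_le (fun _ => norm_nonneg _) (copNorm_mul_le d)
        (hF.image _) m n)
      fun p σ => posLog_sSup_image_pow_add_le (f := vOp (vp p) d) (vOp_nonneg _)
        (vOp_mul_le _) (hF.image _) m n
  exact ⟨hlim, hsub.eq_sInf_of_tendsto
    (fun _ => placeSum_nonneg (fun _ => posLog_nonneg) fun _ _ => posLog_nonneg) hlim⟩
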